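/- Let v = (1 + i + j + k)/2. Then for all a, b in the binary tetrahedral group 𝐓 such that a * star b ∈ {±1, ±i, ±j, ±k} (i.e. a and b lie in the same coset of the quaternion group 𝐃₂ in 𝐓), one has re(a * v * star b) ≤ 1/2, with equality when a = b = 1. Consequently, the distance in the orbit space of S³ under the group (𝐓/𝐃₂; 𝐓/𝐃₂) = {q ↦ a·q·b⁻¹ : a, b ∈ 𝐓, a𝐃₂ = b𝐃₂} between the orbit of 1 and the orbit of v is exactly π/3, so the diameter of this orbit space is at least π/3. -/

import Mathlib

open Quaternion Real

noncomputable section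

/-- The quaternion `i`. -/
def qi : ℍ[ℝ] := ⟨0, 1, 0, 0⟩
/-- The quaternion `j`. -/
def qj : ℍ[ℝ] := ⟨0, 0, 1, 0⟩
/-- The quaternion `k`. -/
def qk : ℍ[ℝ] := ⟨0, 0, 0, 1⟩

/-- The quaternion group `𝐃₂ = {±1, ±i, ±j, ±k}`. -/
def binD2 : Set ℍ[ℝ] := ({1, -1, qi, -qi, qj, -qj, qk, -qk} : Set ℍ[ℝ])

/-- The binary tetrahedral group `𝐓 = {±1, ±i, ±j, ±k} ∪ {(±1 ± i ± j ± k)/2}`. -/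
def binT : Set ℍ[ℝ] :=
  binD2 ∪
    {q | ∃ s₁ s₂ s₃ s₄ : ℝ, (s₁ = 1 ∨ s₁ = -1) ∧ (s₂ = 1 ∨ s₂ = -1) ∧
      (s₃ = 1 ∨ s₃ = -1) ∧ (s₄ = 1 ∨ s₄ = -1) ∧
      q = (⟨s₁ / 2, s₂ / 2, s₃ / 2, s₄ / 2⟩ : ℍ[ℝ])}

/-- The unit quaternion `v = (1 + i + j + k)/2`. -/
def vTD2 : ℍ[ℝ] := ⟨1 / 2, 1 / 2, 1 / 2, 1 / 2⟩

/-!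
Write `a·v·b⁻¹ = (a·b⁻¹)·(b·v·b⁻¹)`. Conjugating `v` by an element of `𝐓` gives a quaternion
whose coordinates are all `±1/2`, and left multiplication by an element of `𝐃₂` permutes
coordinates up to sign, so `re(a·v·b⁻¹) ≤ 1/2`. As `arccos` is antitone and
`arccos (1/2) = π/3`, the orbits of `v` and `1` are at distance exactly `π/3`.
-/

theorem mul_mul_eq_mul_mul_conj {M : Type*} [Monoid M] {a b c x : M} (h : c * b = 1) :
    a * x * c = a * c * (b * x * c) := by
  rw [mul_assoc a c, ← mul_assoc c, ← mul_assoc c, h, one_mul, mul_assoc a x]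

def halfCube : Set ℍ[ℝ] :=
  {q | |q.re| ≤ 1 / 2 ∧ |q.imI| ≤ 1 / 2 ∧ |q.imJ| ≤ 1 / 2 ∧ |q.imK| ≤ 1 / 2}

/-- The distance between the orbits of `x` and `y` in `S³ / (𝐓/𝐃₂; 𝐓/𝐃₂)`. -/
def orbitDist (x y : ℍ[ℝ]) : ℝ :=
  sInf {t : ℝ | ∃ a ∈ binT, ∃ b ∈ binT, a * star b ∈ binD2 ∧
    t = arccos ((a * x * star b * star y).re)}

theorem one_mem_binD2 : (1 : ℍ[ℝ]) ∈ binD2 := Or.inl rfl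

theorem one_mem_binT : (1 : ℍ[ℝ]) ∈ binT := Or.inl one_mem_binD2

theorem normSq_eq_one_of_mem_binT {q : ℍ[ℝ]} (hq : q ∈ binT) : normSq q = 1 := by
  rw [normSq_def']
  rcases hq with hq | ⟨s₁, s₂, s₃, s₄, h₁, h₂, h₃, h₄, rfl⟩
  · -- `re_neg` is applied before `qi` unfolds to a `QuaternionAlgebra.mk`, on which the `ℍ[ℝ]`
    -- lemmas no longer fire.
    rcases hq with rfl | rfl | rfl | rfl | rfl | rfl | rfl | rfl <;>
      norm_num [↓re_neg, ↓imI_neg, ↓imJ_neg, ↓imK_neg, qi, qj, qk]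
  · rcases h₁ with rfl | rfl <;> rcases h₂ with rfl | rfl <;> rcases h₃ with rfl | rfl <;>
      rcases h₄ with rfl | rfl <;> norm_num

theorem star_mul_self_of_mem_binT {q : ℍ[ℝ]} (hq : q ∈ binT) : star q * q = 1 := by
  rw [star_mul_self, normSq_eq_one_of_mem_binT hq, coe_one]

theorem mul_mem_halfCube_of_mem_binD2 {d q : ℍ[ℝ]} (hd : d ∈ binD2) (hq : q ∈ halfCube) :
    d * q ∈ halfCube := by
  simp only [halfCube, Set.mem_ofPred_eq, one_div, re_mul, imI_mul, imJ_mul, imK_mul] at hq ⊢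
  obtain ⟨h₁, h₂, h₃, h₄⟩ := hq
  rcases hd with rfl | rfl | rfl | rfl | rfl | rfl | rfl | rfl <;>
    simp [↓re_neg, ↓imI_neg, ↓imJ_neg, ↓imK_neg, qi, qj, qk, *]

theorem conj_vTD2_mem_halfCube {b : ℍ[ℝ]} (hb : b ∈ binT) : b * vTD2 * star b ∈ halfCube := by
  simp only [halfCube, Set.mem_ofPred_eq, abs_le, re_mul, imI_mul, imJ_mul, imK_mul, re_star,
    imI_star, imJ_star, imK_star]
  rcases hb with hb | ⟨s₁, s₂, s₃, s₄, h₁, h₂, h₃, h₄, rfl⟩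
  · rcases hb with rfl | rfl | rfl | rfl | rfl | rfl | rfl | rfl <;>
      norm_num [↓re_neg, ↓imI_neg, ↓imJ_neg, ↓imK_neg, qi, qj, qk, vTD2]
  · rcases h₁ with rfl | rfl <;> rcases h₂ with rfl | rfl <;> rcases h₃ with rfl | rfl <;>
      rcases h₄ with rfl | rfl <;> norm_num [vTD2]

theorem re_mul_vTD2_mul_star_le {a b : ℍ[ℝ]} (hb : b ∈ binT) (hab : a * star b ∈ binD2) :
    (a * vTD2 * star b).re ≤ 1 / 2 := by
  rw [mul_mul_eq_mul_mul_conj (star_mul_self_of_mem_binT hb)]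
  exact (le_abs_self _).trans (mul_mem_halfCube_of_mem_binD2 hab (conj_vTD2_mem_halfCube hb)).1

theorem re_vTD2 : vTD2.re = 1 / 2 := rfl

theorem norm_vTD2 : ‖vTD2‖ = 1 := by
  have h : ‖vTD2‖ * ‖vTD2‖ = 1 := by
    rw [← normSq_eq_norm_mul_self, normSq_def']
    norm_num [vTD2]
  nlinarith [norm_nonneg vTD2]

theorem arccos_one_half : arccos (1 / 2) = π / 3 := by
  rw [← cos_pi_div_three, arccos_cos (by positivity) (by linarith [pi_pos])]

theorem isLeast_arccos_re_mul_vTD2_mul_star :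
    IsLeast {t : ℝ | ∃ a ∈ binT, ∃ b ∈ binT, a * star b ∈ binD2 ∧
      t = arccos ((a * vTD2 * star b).re)} (π / 3) := by
  refine ⟨⟨1, one_mem_binT, 1, one_mem_binT, by simpa using one_mem_binD2, ?_⟩, ?_⟩
  · rw [one_mul, star_one, mul_one, re_vTD2, arccos_one_half]
  · rintro t ⟨a, -, b, hb, hab, rfl⟩
    rw [← arccos_one_half]
    exact arccos_le_arccos (re_mul_vTD2_mul_star_le hb hab)

theorem orbitDist_le_pi (x y : ℍ[ℝ]) : orbitDist x y ≤ π := by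
  refine csInf_le_of_le ?_ ⟨1, one_mem_binT, 1, one_mem_binT, by simpa using one_mem_binD2, rfl⟩
    (arccos_le_pi _)
  refine ⟨0, ?_⟩
  rintro t ⟨a, -, b, -, -, rfl⟩
  exact arccos_nonneg _

theorem orbitDist_vTD2_one : orbitDist vTD2 1 = π / 3 := by
  simpa only [orbitDist, star_one, mul_one] using isLeast_arccos_re_mul_vTD2_mul_star.csInf_eq

/-- For `v = (1+i+j+k)/2`: `re(a·v·b⁻¹) ≤ 1/2` for all `a, b ∈ 𝐓` with
`a·b⁻¹ ∈ 𝐃₂` (same coset of `𝐃₂` in `𝐓`), with equality at `a = b = 1`; hence the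
distance between the orbits of `1` and `v` under the group `(𝐓/𝐃₂; 𝐓/𝐃₂)` is exactly
`π/3`, and the diameter of that orbit space is at least `π/3`. -/
theorem binaryTetrahedral_mod_D2_vertex_distance :
    (∀ a ∈ binT, ∀ b ∈ binT, a * star b ∈ binD2 →
        (a * vTD2 * star b).re ≤ 1 / 2) ∧
    ((1 : ℍ[ℝ]) * vTD2 * star (1 : ℍ[ℝ])).re = 1 / 2 ∧
    sInf {t : ℝ | ∃ a ∈ binT, ∃ b ∈ binT, a * star b ∈ binD2 ∧
        t = Real.arccos ((a * vTD2 * star b).re)} = π / 3 ∧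
    sSup {d : ℝ | ∃ x y : ℍ[ℝ], ‖x‖ = 1 ∧ ‖y‖ = 1 ∧
        d = sInf {t : ℝ | ∃ a ∈ binT, ∃ b ∈ binT, a * star b ∈ binD2 ∧
          t = Real.arccos ((a * x * star b * star y).re)}} ≥ π / 3 := by
  refine ⟨fun a _ b hb hab => re_mul_vTD2_mul_star_le hb hab, ?_,
    isLeast_arccos_re_mul_vTD2_mul_star.csInf_eq, ?_⟩
  · rw [one_mul, star_one, mul_one, re_vTD2]
  · change sSup {d | ∃ x y : ℍ[ℝ], ‖x‖ = 1 ∧ ‖y‖ = 1 ∧ d = orbitDist x y} ≥ π / 3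
    refine le_csSup ⟨π, ?_⟩ ⟨vTD2, 1, norm_vTD2, norm_one, orbitDist_vTD2_one.symm⟩
    rintro d ⟨x, y, -, -, rfl⟩
    exact orbitDist_le_pi x y

end
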